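/- The all-ones divisor C on the triangulated product Δ (i.e., C(r) = 1 for every edge r of Δ) is ℚ-Cartier if and only if for every vertex (a,b) of Δ: the number of c∈V(H) with {(a,b),(x,c)}∈E(Δ) is the same for every neighbor x of a in G, and the number of c∈V(G) with {(a,b),(c,y)}∈E(Δ) is the same for every neighbor y of b in H. -/

import Mathlib

open scoped Classical
open Finset

section TriangulatedProduct

variable {VG VH : Type*}

/-- The column of the Laplacian matrix of `G` indexed by the vertex `w`:
its entry at `v` is `-deg v` if `v = w`, `1` if `v` is adjacent to `w`, and `0` otherwise. -/
noncomputable def lapCol (G : SimpleGraph VG) [Fintype VG] (w v : VG) : ℤ :=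
  if v = w then -(((Finset.univ.filter (fun u => G.Adj v u)).card : ℤ))
  else if G.Adj v w then 1 else 0

/-- A divisor on a finite graph is principal if it lies in the ℤ-span of the
columns of the Laplacian matrix of the graph. -/
def GraphPrincipal (G : SimpleGraph VG) [Fintype VG] (D : VG → ℤ) : Prop :=
  ∃ f : VG → ℤ, ∀ v, D v = ∑ w, f w * lapCol G w v

/-- A triangulated product of the graphs `G` and `H`: for each square
(an edge `aa'` of `G` together with an edge `bb'` of `H`) exactly one of the two
possible diagonals `{(a,b),(a',b')}`, `{(a,b'),(a',b)}` is chosen.  The structure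
records the resulting symmetric "diagonal edge" relation. -/
structure TriProd (G : SimpleGraph VG) (H : SimpleGraph VH) where
  diag : VG × VH → VG × VH → Prop
  diag_symm : ∀ u v, diag u v → diag v u
  diag_adj : ∀ a a' b b', diag (a, b) (a', b') → G.Adj a a' ∧ H.Adj b b'
  diag_choice : ∀ a a' b b', G.Adj a a' → H.Adj b b' →
    (diag (a, b) (a', b') ∧ ¬ diag (a, b') (a', b)) ∨
    (¬ diag (a, b) (a', b') ∧ diag (a, b') (a', b))

namespace TriProd

variable {G : SimpleGraph VG} {H : SimpleGraph VH}

/-- `u` and `v` form an edge of the triangulated product: a horizontal edge,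
a vertical edge, or a diagonal edge. -/
def Adj (T : TriProd G H) (u v : VG × VH) : Prop :=
  (u.2 = v.2 ∧ G.Adj u.1 v.1) ∨ (u.1 = v.1 ∧ H.Adj u.2 v.2) ∨ T.diag u v

/-- `{u, v, w}` is a triangle (2-face) of the triangulated product. -/
def IsFace (T : TriProd G H) (u v w : VG × VH) : Prop :=
  ∃ a a' b b', T.diag (a, b) (a', b') ∧
    ({u, v, w} : Finset (VG × VH)) = {(a, b), (a', b'), (a', b)}

/-- `{u, v, w}` is a triangle of the triangulated product whose diagonal edge
does not contain the vertex `x`. -/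
def IsFaceAvoiding (T : TriProd G H) (u v w x : VG × VH) : Prop :=
  ∃ a a' b b', T.diag (a, b) (a', b') ∧
    ({u, v, w} : Finset (VG × VH)) = {(a, b), (a', b'), (a', b)} ∧
    x ≠ (a, b) ∧ x ≠ (a', b')

variable [Fintype VG] [Fintype VH]

/-- The structure constant `α(e, x)` for the edge `e = {u, v}` of the
triangulated product and the vertex `x`. -/
noncomputable def alpha (T : TriProd G H) (u v x : VG × VH) : ℤ :=
  if x = u ∨ x = v then
    (if T.diag u v then 1
     else ((Finset.univ.filter (fun w => T.IsFaceAvoiding u v w x)).card : ℤ))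
  else 0

/-- The divisor of the function `φ`, evaluated at the edge `{u, v}` of the
triangulated product: the sum of `φ` over the third vertices of the triangles
containing `{u, v}`, minus `α({u,v},u) φ(u) + α({u,v},v) φ(v)`. -/
noncomputable def Div (T : TriProd G H) (φ : VG × VH → ℤ) (u v : VG × VH) : ℤ :=
  (∑ w ∈ Finset.univ.filter (fun w => T.IsFace u v w), φ w)
    - (T.alpha u v u * φ u + T.alpha u v v * φ v)

/-- A divisor on the triangulated product (a function on edges, encoded as a
function on ordered pairs of vertices) is principal if it agrees with `Div φ`
on every edge, for some `φ`. -/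
def Principal (T : TriProd G H) (D : VG × VH → VG × VH → ℤ) : Prop :=
  ∃ φ : VG × VH → ℤ, ∀ u v, T.Adj u v → D u v = T.Div φ u v

/-- A divisor on the triangulated product is Cartier if near every vertex `x`
it agrees with a principal divisor on all edges containing `x`. -/
def Cartier (T : TriProd G H) (D : VG × VH → VG × VH → ℤ) : Prop :=
  ∀ x : VG × VH, ∃ φ : VG × VH → ℤ,
    ∀ u v, T.Adj u v → (x = u ∨ x = v) → D u v = T.Div φ u v

/-- A divisor is ℚ-Cartier if some nonzero integer multiple of it is Cartier. -/
def QCartier (T : TriProd G H) (D : VG × VH → VG × VH → ℤ) : Prop :=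
  ∃ m : ℤ, m ≠ 0 ∧ T.Cartier (fun u v => m * D u v)

/-- The balancing conditions for a divisor `D` on the triangulated product. -/
def Balanced (T : TriProd G H) (D : VG × VH → VG × VH → ℤ) : Prop :=
  ∀ a : VG, ∀ b : VH,
    (∀ x x' : VG, G.Adj a x → G.Adj a x' →
      (∑ c ∈ Finset.univ.filter (fun c : VH => T.Adj (a, b) (x, c)), D (a, b) (x, c)) =
      (∑ c ∈ Finset.univ.filter (fun c : VH => T.Adj (a, b) (x', c)), D (a, b) (x', c))) ∧
    (∀ y y' : VH, H.Adj b y → H.Adj b y' →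
      (∑ c ∈ Finset.univ.filter (fun c : VG => T.Adj (a, b) (c, y)), D (a, b) (c, y)) =
      (∑ c ∈ Finset.univ.filter (fun c : VG => T.Adj (a, b) (c, y')), D (a, b) (c, y')))

end TriProd

/-- The map `β` sending a pair of divisors on `G` and `H` to a divisor on the
triangulated product: `C(a)` on vertical edges `{(a,b),(a,b')}`, `D(b)` on
horizontal edges `{(a,b),(a',b)}`, and `0` on diagonal edges. -/
noncomputable def beta (C : VG → ℤ) (D : VH → ℤ) (u v : VG × VH) : ℤ :=
  if u.1 = v.1 then C u.1 else if u.2 = v.2 then D u.2 else 0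

end TriangulatedProduct

/-! Summing `Div φ` over the edges from `(a, b)` into the column `{x} × V(H)` gives, square by
square, `∑_{c ~ b} (φ (a, c) - φ (a, b))`, which does not depend on `x`. If `Div φ = m ≠ 0` on
every edge at `(a, b)`, this sum is `m` times the number of those edges, so that number does not
depend on `x`; rows are symmetric. Conversely, if these numbers are `K` for columns and `L` for
rows, the function vanishing at `(a, b)`, equal to `L m / deg a` on the rest of row `b`, to
`K m / deg b` on the rest of column `a`, and to the sum of these two minus `m` elsewhere has
divisor `m` on every edge at `(a, b)`. Taking `m = |V(G)|! |V(H)|!` makes all these divisions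
exact, since connectedness and the existence of an edge make every degree positive. -/

theorem Finset.eq_or_eq_or_eq_of_triple_eq {α : Type*} [DecidableEq α] {u v w p q r : α}
    (h : ({u, v, w} : Finset α) = {p, q, r}) :
    (u = p ∨ u = q ∨ u = r) ∧ (v = p ∨ v = q ∨ v = r) ∧ (w = p ∨ w = q ∨ w = r) ∧
      (p = u ∨ p = v ∨ p = w) ∧ (q = u ∨ q = v ∨ q = w) ∧ (r = u ∨ r = v ∨ r = w) := by
  simp only [Finset.ext_iff, mem_insert, mem_singleton] at h
  exact ⟨(h u).1 (by simp), (h v).1 (by simp), (h w).1 (by simp),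
    (h p).2 (by simp), (h q).2 (by simp), (h r).2 (by simp)⟩

theorem exists_forall_eq_of_forall_eq {α β : Type*} [Nonempty β] {p : α → Prop} {f : α → β}
    (h : ∀ x x', p x → p x' → f x = f x') : ∃ k, ∀ x, p x → f x = k := by
  by_cases hp : ∃ x, p x
  · obtain ⟨x₀, hx₀⟩ := hp
    exact ⟨f x₀, fun x hx => h x x₀ hx hx₀⟩
  · exact ⟨Classical.arbitrary β, fun x hx => absurd ⟨x, hx⟩ hp⟩

theorem Finset.apply_eq_of_sum_eq_card_smul {ι M : Type*} [AddCommGroup M] {s : Finset ι}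
    {f : ι → M} {i : ι} {m : M} (hi : i ∈ s) (hf : ∀ j ∈ s, j ≠ i → f j = m)
    (hsum : ∑ j ∈ s, f j = #s • m) : f i = m := by
  have := sum_eq_single i (fun j hj hji => sub_eq_zero.2 (hf j hj hji)) (absurd hi)
  rw [sum_sub_distrib, hsum, sum_const, sub_self] at this
  exact sub_eq_zero.1 this.symm

namespace TriProd

variable {VG VH : Type*} {G : SimpleGraph VG} {H : SimpleGraph VH} (T : TriProd G H)

theorem ne_of_diag {p q : VG × VH} (h : T.diag p q) : p.1 ≠ q.1 ∧ p.2 ≠ q.2 :=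
  ⟨(T.diag_adj _ _ _ _ h).1.ne, (T.diag_adj _ _ _ _ h).2.ne⟩

theorem diag_comm {p q : VG × VH} : T.diag p q ↔ T.diag q p :=
  ⟨T.diag_symm p q, T.diag_symm q p⟩

theorem diag_iff_not_diag {a x : VG} {b c : VH} (hax : G.Adj a x) (hbc : H.Adj b c) :
    T.diag (x, b) (a, c) ↔ ¬ T.diag (a, b) (x, c) := by
  rw [T.diag_comm]
  rcases T.diag_choice a x b c hax hbc with h | h <;> tauto

theorem adj_comm {u v : VG × VH} : T.Adj u v ↔ T.Adj v u := by
  simp only [Adj, T.diag_comm (p := u), eq_comm (a := u.1), eq_comm (a := u.2), G.adj_comm u.1,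
    H.adj_comm u.2]

theorem diag_of_adj {u v : VG × VH} (h : T.Adj u v) (h₁ : u.1 ≠ v.1) (h₂ : u.2 ≠ v.2) :
    T.diag u v := by
  rcases h with h | h | h
  exacts [absurd h.1 h₂, absurd h.1 h₁, h]

theorem isFace_iff {u v w : VG × VH} :
    T.IsFace u v w ↔
      ∃ p q, T.diag p q ∧ ({u, v, w} : Finset (VG × VH)) = {p, q, (q.1, p.2)} :=
  ⟨fun ⟨_, _, _, _, h, e⟩ => ⟨_, _, h, e⟩, fun ⟨⟨_, _⟩, ⟨_, _⟩, h, e⟩ => ⟨_, _, _, _, h, e⟩⟩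

theorem isFaceAvoiding_iff {u v w x : VG × VH} :
    T.IsFaceAvoiding u v w x ↔ ∃ p q, T.diag p q ∧
      ({u, v, w} : Finset (VG × VH)) = {p, q, (q.1, p.2)} ∧ x ≠ p ∧ x ≠ q :=
  ⟨fun ⟨_, _, _, _, h, e⟩ => ⟨_, _, h, e⟩, fun ⟨⟨_, _⟩, ⟨_, _⟩, h, e⟩ => ⟨_, _, _, _, h, e⟩⟩

theorem isFace_iff' {u v w : VG × VH} :
    T.IsFace u v w ↔
      ∃ p q, T.diag p q ∧ ({u, v, w} : Finset (VG × VH)) = {p, q, (p.1, q.2)} := by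
  rw [isFace_iff]
  refine ⟨fun ⟨p, q, h, e⟩ => ⟨q, p, T.diag_symm _ _ h, ?_⟩,
    fun ⟨p, q, h, e⟩ => ⟨q, p, T.diag_symm _ _ h, ?_⟩⟩ <;> rw [e, insert_comm]

theorem isFaceAvoiding_iff' {u v w x : VG × VH} :
    T.IsFaceAvoiding u v w x ↔ ∃ p q, T.diag p q ∧
      ({u, v, w} : Finset (VG × VH)) = {p, q, (p.1, q.2)} ∧ x ≠ p ∧ x ≠ q := by
  rw [isFaceAvoiding_iff]
  refine ⟨fun ⟨p, q, h, e, hp, hq⟩ => ⟨q, p, T.diag_symm _ _ h, ?_, hq, hp⟩,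
    fun ⟨p, q, h, e, hp, hq⟩ => ⟨q, p, T.diag_symm _ _ h, ?_, hq, hp⟩⟩ <;>
    rw [e, insert_comm]

theorem isFace_comm {u v w : VG × VH} : T.IsFace u v w ↔ T.IsFace v u w := by
  simp only [isFace_iff, insert_comm u v]

theorem isFaceAvoiding_comm {u v w x : VG × VH} :
    T.IsFaceAvoiding u v w x ↔ T.IsFaceAvoiding v u w x := by
  simp only [isFaceAvoiding_iff, insert_comm u v]

theorem isFace_iff_of_diag {u v w : VG × VH} (huv : T.diag u v) :
    T.IsFace u v w ↔ w = (u.1, v.2) ∨ w = (v.1, u.2) := by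
  have := T.ne_of_diag huv
  rw [isFace_iff]
  constructor
  · rintro ⟨p, q, hpq, e⟩
    have := T.ne_of_diag hpq
    have := Finset.eq_or_eq_or_eq_of_triple_eq e
    grind
  · rintro (rfl | rfl)
    · exact ⟨v, u, T.diag_symm _ _ huv, by grind⟩
    · exact ⟨u, v, huv, by grind⟩

theorem isFace_iff_of_snd_eq {u v w : VG × VH} (hne : u ≠ v) (huv : u.2 = v.2) :
    T.IsFace u v w ↔ (T.diag u w ∧ w.1 = v.1) ∨ (T.diag v w ∧ w.1 = u.1) := by
  rw [isFace_iff]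
  constructor
  · rintro ⟨p, q, hpq, e⟩
    have := T.ne_of_diag hpq
    have := T.diag_symm _ _ hpq
    have := Finset.eq_or_eq_or_eq_of_triple_eq e
    grind
  · rintro (⟨h, hw⟩ | ⟨h, hw⟩)
    · exact ⟨u, w, h, by grind⟩
    · exact ⟨v, w, h, by grind⟩

theorem isFaceAvoiding_left_iff_of_snd_eq {u v w : VG × VH} (hne : u ≠ v) (huv : u.2 = v.2) :
    T.IsFaceAvoiding u v w u ↔ T.diag v w ∧ w.1 = u.1 := by
  rw [isFaceAvoiding_iff]
  constructor
  · rintro ⟨p, q, hpq, e, hp, hq⟩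
    have := T.ne_of_diag hpq
    have := T.diag_symm _ _ hpq
    have := Finset.eq_or_eq_or_eq_of_triple_eq e
    grind
  · rintro ⟨h, hw⟩
    have := T.ne_of_diag h
    exact ⟨v, w, h, by grind, by grind⟩

def swap : TriProd H G where
  diag u v := T.diag u.swap v.swap
  diag_symm _ _ h := T.diag_symm _ _ h
  diag_adj _ _ _ _ h := (T.diag_adj _ _ _ _ h).symm
  diag_choice b b' a a' hb ha := by
    simpa only [Prod.swap_prod_mk, T.diag_comm (p := (a', b))] using T.diag_choice a a' b b' ha hb

theorem swap_diag {u v : VH × VG} : T.swap.diag u v ↔ T.diag u.swap v.swap := Iff.rfl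

theorem adj_swap {u v : VG × VH} : T.swap.Adj u.swap v.swap ↔ T.Adj u v := by
  simp only [Adj, swap_diag, Prod.swap_swap, Prod.fst_swap, Prod.snd_swap]
  tauto

theorem isFace_swap {u v w : VG × VH} : T.swap.IsFace u.swap v.swap w.swap ↔ T.IsFace u v w := by
  rw [isFace_iff, isFace_iff']
  constructor
  · rintro ⟨p, q, h, e⟩
    exact ⟨p.swap, q.swap, h, by simpa [image_insert] using congrArg (image Prod.swap) e⟩
  · rintro ⟨p, q, h, e⟩
    exact ⟨p.swap, q.swap, by simpa [swap_diag] using h,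
      by simpa [image_insert] using congrArg (image Prod.swap) e⟩

theorem isFaceAvoiding_swap {u v w x : VG × VH} :
    T.swap.IsFaceAvoiding u.swap v.swap w.swap x.swap ↔ T.IsFaceAvoiding u v w x := by
  rw [isFaceAvoiding_iff, isFaceAvoiding_iff']
  constructor
  · rintro ⟨p, q, h, e, hp, hq⟩
    refine ⟨p.swap, q.swap, h, by simpa [image_insert] using congrArg (image Prod.swap) e, ?_, ?_⟩
    all_goals rintro rfl; simp at hp hq
  · rintro ⟨p, q, h, e, hp, hq⟩
    exact ⟨p.swap, q.swap, by simpa [swap_diag] using h,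
      by simpa [image_insert] using congrArg (image Prod.swap) e, by simpa using hp,
      by simpa using hq⟩

variable [Fintype VG] [Fintype VH]

theorem alpha_comm (u v x : VG × VH) : T.alpha u v x = T.alpha v u x := by
  simp only [alpha, or_comm, T.diag_comm (p := u), T.isFaceAvoiding_comm (u := u)]

theorem Div_comm (φ : VG × VH → ℤ) (u v : VG × VH) : T.Div φ u v = T.Div φ v u := by
  simp only [Div, T.isFace_comm (u := u), T.alpha_comm u v]
  ring

theorem alpha_swap (u v x : VG × VH) : T.swap.alpha u.swap v.swap x.swap = T.alpha u v x := by
  simp only [alpha, Prod.swap_inj, swap_diag, Prod.swap_swap]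
  congr 3
  exact card_equiv (Equiv.prodComm _ _) (by simp [← T.isFaceAvoiding_swap])

theorem Div_swap (φ : VG × VH → ℤ) (u v : VG × VH) :
    T.swap.Div (fun p => φ p.swap) u.swap v.swap = T.Div φ u v := by
  simp only [Div, alpha_swap]
  congr 1
  exact sum_equiv (Equiv.prodComm _ _) (by simp [← T.isFace_swap]) (by simp)

theorem Div_of_diag {u v : VG × VH} (h : T.diag u v) (φ : VG × VH → ℤ) :
    T.Div φ u v = φ (u.1, v.2) + φ (v.1, u.2) - φ u - φ v := by
  have faces : ({w | T.IsFace u v w} : Finset _) = {(u.1, v.2), (v.1, u.2)} := by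
    ext w
    simp [T.isFace_iff_of_diag h]
  have hne : (u.1, v.2) ≠ (v.1, u.2) := by simp [Prod.ext_iff, (T.ne_of_diag h).1]
  simp only [Div, alpha, faces, sum_pair hne, true_or, or_true, if_true, h]
  ring

theorem alpha_horizontal_left {a x : VG} {b : VH} (hax : G.Adj a x) :
    T.alpha (a, b) (x, b) (a, b) = #{c | T.diag (x, b) (a, c)} := by
  have faces : ({w | T.IsFaceAvoiding (a, b) (x, b) w (a, b)} : Finset _) =
      image (Prod.mk a) {c | T.diag (x, b) (a, c)} := by
    ext ⟨y, c⟩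
    have hne : ((a, b) : VG × VH) ≠ (x, b) := by simp [hax.ne]
    simp only [mem_filter, mem_univ, true_and, mem_image, Prod.mk.injEq,
      T.isFaceAvoiding_left_iff_of_snd_eq hne rfl]
    grind
  rw [alpha, if_pos (Or.inl rfl), if_neg fun h : T.diag (a, b) (x, b) => (T.ne_of_diag h).2 rfl,
    faces, card_image_of_injective _ (Prod.mk_right_injective a)]

theorem Div_horizontal {a x : VG} {b : VH} (hax : G.Adj a x) (φ : VG × VH → ℤ) :
    T.Div φ (a, b) (x, b) = ∑ c ∈ H.neighborFinset b,
      if T.diag (a, b) (x, c) then φ (x, c) - φ (x, b) else φ (a, c) - φ (a, b) := by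
  have hne : ((a, b) : VG × VH) ≠ (x, b) := by simp [hax.ne]
  have diag_flip (c : VH) (hc : c ∈ H.neighborFinset b) :=
    T.diag_iff_not_diag hax ((H.mem_neighborFinset _ _).1 hc)
  have faces : ({w | T.IsFace (a, b) (x, b) w} : Finset _) = (H.neighborFinset b).image
      fun c => if T.diag (a, b) (x, c) then (x, c) else (a, c) := by
    ext ⟨y, c⟩
    simp only [mem_filter, mem_univ, true_and, mem_image, SimpleGraph.mem_neighborFinset,
      T.isFace_iff_of_snd_eq hne rfl]
    have := T.diag_adj a x b c
    have := T.diag_adj x a b c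
    have := T.diag_iff_not_diag (b := b) (c := c) hax
    grind
  have injOn : Set.InjOn (fun c => if T.diag (a, b) (x, c) then (x, c) else (a, c))
      (H.neighborFinset b) := fun c _ c' _ h => by
    simpa [apply_ite Prod.snd] using congrArg Prod.snd h
  have count (P : VH → Prop) (hP : ∀ c, P c → H.Adj b c) :
      (#{c | P c} : ℤ) = ∑ c ∈ H.neighborFinset b, if P c then 1 else 0 := by
    rw [← natCast_card_filter]
    congr 2
    ext c
    simpa using hP c
  rw [Div, faces, sum_image injOn, T.alpha_horizontal_left hax, T.alpha_comm,
    T.alpha_horizontal_left hax.symm, count _ fun c h => (T.diag_adj _ _ _ _ h).2,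
    count _ fun c h => (T.diag_adj _ _ _ _ h).2, sum_mul, sum_mul, ← sum_add_distrib,
    ← sum_sub_distrib]
  refine sum_congr rfl fun c hc => ?_
  rw [diag_flip c hc]
  split_ifs <;> ring

theorem sum_Div_column {a x : VG} {b : VH} (hax : G.Adj a x) (φ : VG × VH → ℤ) :
    ∑ c with T.Adj (a, b) (x, c), T.Div φ (a, b) (x, c) =
      ∑ c ∈ H.neighborFinset b, (φ (a, c) - φ (a, b)) := by
  have column : ({c | T.Adj (a, b) (x, c)} : Finset VH) =
      insert b {c ∈ H.neighborFinset b | T.diag (a, b) (x, c)} := by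
    ext c
    have := T.diag_adj a x b c
    simp only [Adj, mem_filter, mem_insert, SimpleGraph.mem_neighborFinset]
    grind [hax.ne]
  rw [column, sum_insert (by simp), Div_horizontal T hax, sum_filter, ← sum_add_distrib]
  refine sum_congr rfl fun c _ => ?_
  split_ifs with h
  · rw [Div_of_diag T h]
    ring
  · ring

theorem sum_Div_row {a : VG} {b y : VH} (hby : H.Adj b y) (φ : VG × VH → ℤ) :
    ∑ c with T.Adj (a, b) (c, y), T.Div φ (a, b) (c, y) =
      ∑ c ∈ G.neighborFinset a, (φ (c, b) - φ (a, b)) := by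
  calc _ = ∑ c with T.swap.Adj (b, a) (y, c), T.swap.Div (fun p => φ p.swap) (b, a) (y, c) :=
        sum_congr (by ext c; simpa using (T.adj_swap (u := (a, b)) (v := (c, y))).symm)
          fun c _ => (T.Div_swap φ (a, b) (c, y)).symm
    _ = _ := T.swap.sum_Div_column hby _

theorem cartier_const_iff (m : ℤ) : T.Cartier (fun _ _ => m) ↔
    ∀ p, ∃ φ : VG × VH → ℤ, ∀ v, T.Adj p v → T.Div φ p v = m := by
  refine forall_congr' fun p => exists_congr fun φ =>
    ⟨fun h v hv => (h p v hv (Or.inl rfl)).symm, ?_⟩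
  rintro h u v huv (rfl | rfl)
  · exact (h v huv).symm
  · rw [Div_comm]
    exact (h u (T.adj_comm.1 huv)).symm

theorem card_column_eq_of_Div_eq {m : ℤ} (hm : m ≠ 0) {φ : VG × VH → ℤ} {a : VG} {b : VH}
    (hφ : ∀ v, T.Adj (a, b) v → T.Div φ (a, b) v = m) {x x' : VG} (hx : G.Adj a x)
    (hx' : G.Adj a x') : #{c | T.Adj (a, b) (x, c)} = #{c | T.Adj (a, b) (x', c)} := by
  have key (x : VG) (hx : G.Adj a x) :
      #{c | T.Adj (a, b) (x, c)} * m = ∑ c ∈ H.neighborFinset b, (φ (a, c) - φ (a, b)) := by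
    rw [← T.sum_Div_column hx, sum_congr rfl fun c hc => hφ _ (mem_filter.1 hc).2, sum_const,
      nsmul_eq_mul]
  exact_mod_cast mul_right_cancel₀ hm ((key x hx).trans (key x' hx').symm)

theorem card_row_eq_of_Div_eq {m : ℤ} (hm : m ≠ 0) {φ : VG × VH → ℤ} {a : VG} {b : VH}
    (hφ : ∀ v, T.Adj (a, b) v → T.Div φ (a, b) v = m) {y y' : VH} (hy : H.Adj b y)
    (hy' : H.Adj b y') : #{c | T.Adj (a, b) (c, y)} = #{c | T.Adj (a, b) (c, y')} := by
  have key (y : VH) (hy : H.Adj b y) :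
      #{c | T.Adj (a, b) (c, y)} * m = ∑ c ∈ G.neighborFinset a, (φ (c, b) - φ (a, b)) := by
    rw [← T.sum_Div_row hy, sum_congr rfl fun c hc => hφ _ (mem_filter.1 hc).2, sum_const,
      nsmul_eq_mul]
  exact_mod_cast mul_right_cancel₀ hm ((key y hy).trans (key y' hy').symm)

theorem exists_local_potential {a : VG} {b : VH} {m : ℤ}
    (hcol : ∀ x x' : VG, G.Adj a x → G.Adj a x' →
      #{c | T.Adj (a, b) (x, c)} = #{c | T.Adj (a, b) (x', c)})
    (hrow : ∀ y y' : VH, H.Adj b y → H.Adj b y' →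
      #{c | T.Adj (a, b) (c, y)} = #{c | T.Adj (a, b) (c, y')})
    (hG : (G.degree a : ℤ) ∣ m) (hH : (H.degree b : ℤ) ∣ m) :
    ∃ φ : VG × VH → ℤ, ∀ v, T.Adj (a, b) v → T.Div φ (a, b) v = m := by
  obtain ⟨K, hK⟩ := exists_forall_eq_of_forall_eq hcol
  obtain ⟨L, hL⟩ := exists_forall_eq_of_forall_eq hrow
  obtain ⟨l, hl⟩ := hG
  obtain ⟨k, hk⟩ := hH
  set φ : VG × VH → ℤ := fun p =>
    (if p.1 = a then 0 else L * l) + (if p.2 = b then 0 else K * k) -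
      (if p.1 = a ∨ p.2 = b then 0 else m)
  have diag_eq (x : VG) (y : VH) (h : T.diag (a, b) (x, y)) : T.Div φ (a, b) (x, y) = m := by
    have := T.ne_of_diag h
    simp only [Div_of_diag T h, φ, this.1.symm, this.2.symm, or_self, or_false, false_or,
      if_true, if_false]
    ring
  refine ⟨φ, fun ⟨x, y⟩ h => ?_⟩
  rcases h with ⟨rfl, hax⟩ | ⟨rfl, hby⟩ | h
  · refine apply_eq_of_sum_eq_card_smul (f := fun c => T.Div φ (a, b) (x, c))
      (mem_filter.2 ⟨mem_univ _, Or.inl ⟨rfl, hax⟩⟩)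
      (fun c hc hcb => diag_eq x c (T.diag_of_adj (mem_filter.1 hc).2 hax.ne (Ne.symm hcb))) ?_
    calc _ = ∑ c ∈ H.neighborFinset b, (φ (a, c) - φ (a, b)) := T.sum_Div_column hax φ
      _ = ∑ c ∈ H.neighborFinset b, (K : ℤ) * k :=
        sum_congr rfl fun c hc => by simp [φ, ((H.mem_neighborFinset _ _).1 hc).ne.symm]
      _ = _ := by
        rw [sum_const, SimpleGraph.card_neighborFinset_eq_degree, hK x hax, hk, nsmul_eq_mul,
          nsmul_eq_mul]
        ring
  · refine apply_eq_of_sum_eq_card_smul (f := fun c => T.Div φ (a, b) (c, y))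
      (mem_filter.2 ⟨mem_univ _, Or.inr (Or.inl ⟨rfl, hby⟩)⟩)
      (fun c hc hca => diag_eq c y (T.diag_of_adj (mem_filter.1 hc).2 (Ne.symm hca) hby.ne)) ?_
    calc _ = ∑ c ∈ G.neighborFinset a, (φ (c, b) - φ (a, b)) := T.sum_Div_row hby φ
      _ = ∑ c ∈ G.neighborFinset a, (L : ℤ) * l :=
        sum_congr rfl fun c hc => by simp [φ, ((G.mem_neighborFinset _ _).1 hc).ne.symm]
      _ = _ := by
        rw [sum_const, SimpleGraph.card_neighborFinset_eq_degree, hL y hby, hl, nsmul_eq_mul,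
          nsmul_eq_mul]
        ring
  · exact diag_eq x y h

end TriProd

theorem SimpleGraph.Connected.degree_dvd_factorial {V : Type*} [Fintype V] {G : SimpleGraph V}
    (hG : G.Connected) (he : ∃ a a', G.Adj a a') (v : V) :
    G.degree v ∣ (Fintype.card V).factorial := by
  obtain ⟨a, a', h⟩ := he
  have : Nontrivial V := ⟨⟨a, a', h.ne⟩⟩
  exact Nat.dvd_factorial (hG.preconnected.degree_pos_of_nontrivial v) (G.degree_lt_card_verts v).le

/-- The all-ones divisor on the triangulated product `Δ` is ℚ-Cartier
if and only if for every vertex `(a,b)` of `Δ` the number of edges of `Δ` from `(a,b)`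
into the column `{x} × V(H)` is the same for every neighbour `x` of `a` in `G`, and the
number of edges of `Δ` from `(a,b)` into the row `V(G) × {y}` is the same for every
neighbour `y` of `b` in `H`. -/
theorem all_ones_qcartier_iff {VG VH : Type*} [Fintype VG] [Fintype VH]
    (G : SimpleGraph VG) (H : SimpleGraph VH)
    (hG : G.Connected) (hH : H.Connected)
    (hGe : ∃ a a', G.Adj a a') (hHe : ∃ b b', H.Adj b b')
    (T : TriProd G H) :
    T.QCartier (fun _ _ => (1 : ℤ)) ↔
      ∀ a : VG, ∀ b : VH,
        (∀ x x' : VG, G.Adj a x → G.Adj a x' →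
          (Finset.univ.filter (fun c : VH => T.Adj (a, b) (x, c))).card =
          (Finset.univ.filter (fun c : VH => T.Adj (a, b) (x', c))).card) ∧
        (∀ y y' : VH, H.Adj b y → H.Adj b y' →
          (Finset.univ.filter (fun c : VG => T.Adj (a, b) (c, y))).card =
          (Finset.univ.filter (fun c : VG => T.Adj (a, b) (c, y'))).card) := by
  simp only [TriProd.QCartier, mul_one, TriProd.cartier_const_iff]
  constructor
  · rintro ⟨m, hm, hC⟩ a b
    obtain ⟨φ, hφ⟩ := hC (a, b)
    exact ⟨fun _ _ => T.card_column_eq_of_Div_eq hm hφ, fun _ _ => T.card_row_eq_of_Div_eq hm hφ⟩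
  · intro hcount
    refine ⟨((Fintype.card VG).factorial * (Fintype.card VH).factorial : ℕ), by positivity,
      fun ⟨a, b⟩ => T.exists_local_potential (hcount a b).1 (hcount a b).2 ?_ ?_⟩
    · exact_mod_cast dvd_mul_of_dvd_left (hG.degree_dvd_factorial hGe a) _
    · exact_mod_cast dvd_mul_of_dvd_right (hH.degree_dvd_factorial hHe b) _
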